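/- A balanced tree T is maximal if and only if T contains no node y whose left child x satisfies (γ_T(x), γ_T(y)) ∈ {(−1, −1), (0, −1)}. -/

import Mathlib

/-- Complete rooted planar binary trees. -/
inductive BTree where
  | leaf : BTree
  | node : BTree → BTree → BTree
  deriving DecidableEq

namespace BTree

/-- The height of a tree. -/
def ht : BTree → ℕ
  | leaf => 0
  | node l r => 1 + max l.ht r.ht

/-- The imbalance value of the root of a tree (`γ`). -/
def imb : BTree → ℤ
  | leaf => 0
  | node l r => (r.ht : ℤ) - l.ht

/-- A tree is balanced if every node has imbalance value in {-1, 0, 1}. -/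
def Balanced : BTree → Prop
  | leaf => True
  | node l r =>
      ((r.ht : ℤ) - l.ht = -1 ∨ (r.ht : ℤ) - l.ht = 0 ∨ (r.ht : ℤ) - l.ht = 1) ∧
      Balanced l ∧ Balanced r

/-- The subtree at a position (`false` = go left, `true` = go right). -/
def subtreeAt : BTree → List Bool → Option BTree
  | t, [] => some t
  | leaf, _ :: _ => none
  | node l _, false :: p => subtreeAt l p
  | node _ r, true :: p => subtreeAt r p

/-- `p` is the position of an internal node of `t`. -/
def IsNodePos (t : BTree) (p : List Bool) : Prop :=
  ∃ l r, subtreeAt t p = some (node l r)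

/-- Right rotation whose root `y` is at position `p`: the subtree
`(A ∧ B) ∧ C` at `p` is replaced by `A ∧ (B ∧ C)`. -/
inductive RotAt : BTree → List Bool → BTree → Prop
  | here (a b c : BTree) : RotAt (node (node a b) c) [] (node a (node b c))
  | left {l l' : BTree} (r : BTree) {p : List Bool} :
      RotAt l p l' → RotAt (node l r) (false :: p) (node l' r)
  | right (l : BTree) {r r' : BTree} {p : List Bool} :
      RotAt r p r' → RotAt (node l r) (true :: p) (node l r')

/-- `t₁` is obtained from `t₀` by a single right rotation (`t₀ ⋌ t₁`). -/
def Rot (t₀ t₁ : BTree) : Prop := ∃ p, RotAt t₀ p t₁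

/-- The Tamari order: reflexive transitive closure of right rotation. -/
def Tamari : BTree → BTree → Prop := Relation.ReflTransGen Rot

/-!
A right rotation at `y = (A ∧ B) ∧ C` only replaces that subtree by `A ∧ (B ∧ C)`. Given that
`(A ∧ B) ∧ C` is balanced, a height computation shows that `A ∧ (B ∧ C)` is balanced exactly when
`(γ(x), γ(y)) ∈ {(-1, -1), (0, -1)}`, and that in this case the rotation does not change the height,
so the imbalance values of all ancestors of `y` are unchanged as well.
-/

def RotationPattern (A B C : BTree) : Prop :=
  (imb (node A B), imb (node (node A B) C)) = (-1, -1) ∨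
  (imb (node A B), imb (node (node A B) C)) = (0, -1)

lemma balanced_of_subtreeAt {t s : BTree} {p : List Bool} (h : Balanced t)
    (hs : subtreeAt t p = some s) : Balanced s := by
  induction p generalizing t with
  | nil => rw [subtreeAt, Option.some.injEq] at hs; exact hs ▸ h
  | cons b p ih =>
    match t, b, h with
    | leaf, _, _ => simp [subtreeAt] at hs
    | node _ _, false, ⟨_, hl, _⟩ => exact ih hl hs
    | node _ _, true, ⟨_, _, hr⟩ => exact ih hr hs

lemma exists_rotAt_of_subtreeAt {t A B C : BTree} {p : List Bool}
    (h : subtreeAt t p = some (node (node A B) C)) : ∃ t', RotAt t p t' := by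
  induction p generalizing t with
  | nil => rw [subtreeAt, Option.some.injEq] at h; exact h ▸ ⟨_, .here A B C⟩
  | cons b p ih =>
    match t, b with
    | leaf, _ => simp [subtreeAt] at h
    | node _ r, false => obtain ⟨_, h'⟩ := ih h; exact ⟨_, .left r h'⟩
    | node l _, true => obtain ⟨_, h'⟩ := ih h; exact ⟨_, .right l h'⟩

lemma RotAt.exists_subtreeAt {t t' : BTree} {p : List Bool} (h : RotAt t p t') :
    ∃ A B C, subtreeAt t p = some (node (node A B) C) ∧
      subtreeAt t' p = some (node A (node B C)) := by
  induction h with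
  | here a b c => exact ⟨a, b, c, rfl, rfl⟩
  | left _ _ ih => exact ih
  | right _ _ ih => exact ih

lemma RotAt.balanced_and_ht_eq {t t' A B C : BTree} {p : List Bool} (h : RotAt t p t')
    (hb : Balanced t) (hs : subtreeAt t p = some (node (node A B) C))
    (hbal : Balanced (node A (node B C))) (hht : (node A (node B C)).ht = (node (node A B) C).ht) :
    Balanced t' ∧ t'.ht = t.ht := by
  induction h with
  | here a b c =>
    simp only [subtreeAt, Option.some.injEq, node.injEq] at hs
    obtain ⟨⟨rfl, rfl⟩, rfl⟩ := hs
    exact ⟨hbal, hht⟩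
  | left r _ ih =>
    obtain ⟨hγ, hl, hr⟩ := hb
    obtain ⟨hl', hht'⟩ := ih hl hs
    exact ⟨⟨hht' ▸ hγ, hl', hr⟩, by simp only [ht, hht']⟩
  | right l _ ih =>
    obtain ⟨hγ, hl, hr⟩ := hb
    obtain ⟨hr', hht'⟩ := ih hr hs
    exact ⟨⟨hht' ▸ hγ, hl, hr'⟩, by simp only [ht, hht']⟩

lemma balanced_rotate_iff {A B C : BTree} (h : Balanced (node (node A B) C)) :
    Balanced (node A (node B C)) ↔ RotationPattern A B C := by
  obtain ⟨hy, ⟨hx, hA, hB⟩, hC⟩ := h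
  simp only [Balanced, RotationPattern, imb, ht, Prod.mk.injEq, hA, hB, hC, true_and,
    and_true] at hy hx ⊢
  omega

lemma ht_rotate_of_rotationPattern {A B C : BTree} (h : RotationPattern A B C) :
    (node A (node B C)).ht = (node (node A B) C).ht := by
  simp only [RotationPattern, imb, ht, Prod.mk.injEq] at h ⊢
  omega

theorem maximal_iff_avoids (T : BTree) (hT : Balanced T) :
    (∀ T1 : BTree, Rot T T1 → ¬ Balanced T1) ↔
      ¬ ∃ (p : List Bool) (A B C : BTree),
          subtreeAt T p = some (node (node A B) C) ∧
          ((imb (node A B), imb (node (node A B) C)) = (-1, -1) ∨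
           (imb (node A B), imb (node (node A B) C)) = (0, -1)) := by
  constructor
  · rintro hmax ⟨p, A, B, C, hs, hpat⟩
    obtain ⟨T1, hrot⟩ := exists_rotAt_of_subtreeAt hs
    have hbal := (balanced_rotate_iff (balanced_of_subtreeAt hT hs)).2 hpat
    exact hmax T1 ⟨p, hrot⟩ (hrot.balanced_and_ht_eq hT hs hbal
      (ht_rotate_of_rotationPattern hpat)).1
  · rintro havoid T1 ⟨p, hrot⟩ hT1
    obtain ⟨A, B, C, hs, hs'⟩ := hrot.exists_subtreeAt
    exact havoid ⟨p, A, B, C, hs,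
      (balanced_rotate_iff (balanced_of_subtreeAt hT hs)).1 (balanced_of_subtreeAt hT1 hs')⟩

end BTree
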